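/- arXiv:1305.6060 — 7 statements merged into one kernel-verified Lean document; each statement's English description precedes it below -/
import Mathlib

section
/- Let X be a Banach space and Y a reflexive closed subspace of X. Then for every x in X, the quotient norm of the coset x + Y in X/Y is attained: there exists y in Y such that ‖x + y‖ = ‖x + Y‖_{X/Y}. -/
/-! The norm of a normed space is weakly lower semicontinuous (it is a supremum of the weakly
continuous functions `‖f ·‖`, `‖f‖ ≤ 1`), and in a reflexive space closed balls are weakly compact
by Banach–Alaoglu in the bidual. Hence `y ↦ ‖x + y‖` attains its minimum over `Y` on the weakly
compact ball of radius `2‖x‖`; outside that ball it exceeds `‖x‖ = ‖x + 0‖` anyway. A global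
minimiser over `Y` realises the quotient norm. -/

/-- A Banach space is reflexive if the canonical inclusion into its double dual is surjective. -/
def IsReflexiveSpace (𝕜 X : Type*) [NontriviallyNormedField 𝕜] [NormedAddCommGroup X]
    [NormedSpace 𝕜 X] : Prop :=
  Function.Surjective (NormedSpace.inclusionInDoubleDual 𝕜 X)

open Metric

section

variable {𝕜 E : Type*} [RCLike 𝕜]

theorem lowerSemicontinuous_norm_toWeakSpace_symm [SeminormedAddCommGroup E] [NormedSpace 𝕜 E] :
    LowerSemicontinuous fun y : WeakSpace 𝕜 E => ‖(toWeakSpace 𝕜 E).symm y‖ := by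
  intro y c hc
  obtain ⟨f, hf, hfy⟩ := exists_dual_vector'' 𝕜 ((toWeakSpace 𝕜 E).symm y)
  have hcont : Continuous fun z : WeakSpace 𝕜 E => ‖f ((toWeakSpace 𝕜 E).symm z)‖ :=
    (WeakBilin.eval_continuous _ f).norm
  filter_upwards [hcont.continuousAt.eventually (lt_mem_nhds (by simpa [hfy] using hc))]
    with z hz
  simpa using hz.trans_le (f.le_of_opNorm_le hf _)

theorem IsReflexiveSpace.isCompact_weakSpace_closedBall [NormedAddCommGroup E] [NormedSpace 𝕜 E]
    (hE : IsReflexiveSpace 𝕜 E) (r : ℝ) :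
    IsCompact ((toWeakSpace 𝕜 E).symm ⁻¹' closedBall 0 r) := by
  have hclosed : IsClosed ((toWeakSpace 𝕜 E).symm ⁻¹' closedBall (0 : E) r) := by
    simpa [Set.preimage, mem_closedBall_zero_iff] using
      (lowerSemicontinuous_norm_toWeakSpace_symm (𝕜 := 𝕜) (E := E)).isClosed_preimage r
  rw [← hclosed.closure_eq]
  refine NormedSpace.isCompact_closure_of_isBounded 𝕜 E _ ?_ ?_
  · convert (isBounded_closedBall : Bornology.IsBounded (closedBall (0 : E) r))
    ext
    simp
  · intro φ _
    obtain ⟨y, hy⟩ := hE (StrongDual.toWeakDual.symm φ)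
    exact ⟨toWeakSpace 𝕜 E y, congrArg StrongDual.toWeakDual hy⟩

theorem Submodule.exists_norm_add_le_of_isReflexiveSpace {X : Type*} [NormedAddCommGroup X]
    [NormedSpace 𝕜 X] (Y : Submodule 𝕜 X) (hY : IsReflexiveSpace 𝕜 Y) (x : X) :
    ∃ y₀ ∈ Y, ∀ y ∈ Y, ‖x + y₀‖ ≤ ‖x + y‖ := by
  set F : WeakSpace 𝕜 Y → ℝ := fun y => ‖x + ((toWeakSpace 𝕜 Y).symm y : X)‖
  have hF : LowerSemicontinuous F :=
    lowerSemicontinuous_norm_toWeakSpace_symm.comp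
      ((continuous_const_add (toWeakSpace 𝕜 X x)).comp (WeakSpace.map Y.subtypeL).continuous)
  set K := (toWeakSpace 𝕜 Y).symm ⁻¹' closedBall 0 (2 * ‖x‖)
  obtain ⟨w, -, hw⟩ := (hF.lowerSemicontinuousOn K).exists_isMinOn ⟨0, by simp⟩
    (hY.isCompact_weakSpace_closedBall _)
  refine ⟨(toWeakSpace 𝕜 Y).symm w, Submodule.coe_mem _, fun y hy => ?_⟩
  by_cases hyK : ‖y‖ ≤ 2 * ‖x‖
  · exact hw (a := toWeakSpace 𝕜 Y ⟨y, hy⟩) (by simpa [K] using hyK)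
  · calc ‖x + ((toWeakSpace 𝕜 Y).symm w : X)‖ ≤ ‖x + ((0 : Y) : X)‖ :=
          hw (a := toWeakSpace 𝕜 Y 0) (by simp)
      _ = ‖x‖ := by simp
      _ ≤ ‖y‖ - ‖x‖ := by linarith [not_le.mp hyK]
      _ ≤ ‖x + y‖ := by
        have := norm_sub_le (x + y) x
        rw [add_sub_cancel_left] at this
        linarith

end

theorem quotient_norm_attained_general {X : Type*} [NormedAddCommGroup X] [NormedSpace ℂ X]
    (Y : Submodule ℂ X)
    (hY : IsReflexiveSpace ℂ Y) (x : X) :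
    ∃ y ∈ Y, ‖x + y‖ = ‖(Submodule.Quotient.mk x : X ⧸ Y)‖ := by
  obtain ⟨y₀, hy₀, hmin⟩ := Y.exists_norm_add_le_of_isReflexiveSpace hY x
  have hcoset : (Submodule.Quotient.mk (x + y₀) : X ⧸ Y) = Submodule.Quotient.mk x := by
    rw [Submodule.Quotient.eq]
    simpa using hy₀
  refine ⟨y₀, hy₀, le_antisymm ?_ (hcoset ▸ Submodule.Quotient.norm_mk_le Y _)⟩
  refine QuotientAddGroup.le_norm_iff.mpr fun m hm => ?_
  have hmx : m - x ∈ Y := (Submodule.Quotient.eq Y).mp hm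
  simpa using hmin _ hmx

/-- If `Y` is a reflexive closed subspace of a Banach space `X`, then the quotient norm of any
coset `x + Y` in `X ⧸ Y` is attained: there is `y ∈ Y` with `‖x + y‖ = ‖x + Y‖`. -/
theorem quotient_norm_attained {X : Type*} [NormedAddCommGroup X] [NormedSpace ℂ X]
    [CompleteSpace X] (Y : Submodule ℂ X) [IsClosed (Y : Set X)]
    (hY : IsReflexiveSpace ℂ Y) (x : X) :
    ∃ y ∈ Y, ‖x + y‖ = ‖(Submodule.Quotient.mk x : X ⧸ Y)‖ :=
  quotient_norm_attained_general Y hY x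
end

section
/- Let X be a Banach space and Y a reflexive closed subspace of X. If x ∈ X with ‖x + Y‖_{X/Y} ≤ C, then the set G = {y ∈ Y : ‖x + y‖ ≤ C} is nonempty, convex, and weakly compact in Y. -/
/-!
Reflexivity identifies `Y` with its bidual, so Banach–Alaoglu makes bounded weakly closed subsets
of `Y` weakly compact, and by Mazur's theorem norm-closed convex sets are weakly closed. The sets
`{y ∈ Y : ‖x + y‖ ≤ C}` are bounded, closed and convex, hence weakly compact. For nonemptiness,
the sets with `C = ‖x + Y‖ + 1 / (n + 1)` are nonempty by definition of the quotient norm and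
decrease, so Cantor's intersection theorem gives a `y` with `‖x + y‖ ≤ ‖x + Y‖`.
-/

noncomputable section

open NormedSpace Metric Bornology Filter Topology

section WeakCompactness

variable {𝕜 E : Type*} [RCLike 𝕜] [NormedAddCommGroup E] [NormedSpace 𝕜 E]
  [NormedSpace ℝ E] [IsScalarTower ℝ 𝕜 E]

variable (𝕜) in
theorem Convex.isClosed_toWeakSpace_image {s : Set E} (hs : Convex ℝ s) (hc : IsClosed s) :
    IsClosed (toWeakSpace 𝕜 E '' s) := by
  rw [← closure_eq_iff_isClosed, ← hs.toWeakSpace_closure 𝕜, hc.closure_eq]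

theorem IsReflexiveSpace.isCompact_toWeakSpace_image (hE : IsReflexiveSpace 𝕜 E) {s : Set E}
    (hb : IsBounded s) (hs : Convex ℝ s) (hc : IsClosed s) :
    IsCompact (toWeakSpace 𝕜 E '' s) := by
  have hrange : Set.range (inclusionInDoubleDualWeak 𝕜 E) = Set.univ := Set.range_eq_univ.2 hE
  have hcompact := isCompact_closure_of_isBounded 𝕜 E (toWeakSpace 𝕜 E '' s)
    (by rwa [(toWeakSpace 𝕜 E).injective.preimage_image]) (by simp [hrange])
  rwa [(hs.isClosed_toWeakSpace_image 𝕜 hc).closure_eq] at hcompact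

end WeakCompactness

theorem Submodule.setOf_norm_add_le_eq_preimage {R X : Type*} [Ring R]
    [SeminormedAddCommGroup X] [Module R X] (Y : Submodule R X) (x : X) (C : ℝ) :
    {y : Y | ‖x + y‖ ≤ C} = (↑) ⁻¹' closedBall (-x) C := by
  ext y
  simp [dist_eq_norm, add_comm]

section Subspace

variable {𝕜 X : Type*} [RCLike 𝕜] [NormedAddCommGroup X] [NormedSpace 𝕜 X] [NormedSpace ℝ X]
  [IsScalarTower ℝ 𝕜 X]

theorem Submodule.convex_setOf_norm_add_le (Y : Submodule 𝕜 X) (x : X) (C : ℝ) :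
    Convex ℝ {y : Y | ‖x + y‖ ≤ C} := by
  rw [Y.setOf_norm_add_le_eq_preimage]
  exact (convex_closedBall (-x) C).linear_preimage (Y.subtype.restrictScalars ℝ)

theorem IsReflexiveSpace.isCompact_toWeakSpace_setOf_norm_add_le {Y : Submodule 𝕜 X}
    (hY : IsReflexiveSpace 𝕜 Y) (x : X) (C : ℝ) :
    IsCompact (toWeakSpace 𝕜 Y '' {y : Y | ‖x + y‖ ≤ C}) := by
  refine hY.isCompact_toWeakSpace_image ?_ (Y.convex_setOf_norm_add_le x C) ?_ <;>
    rw [Y.setOf_norm_add_le_eq_preimage]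
  · exact isometry_subtype_coe.antilipschitz.isBounded_preimage isBounded_closedBall
  · exact isClosed_closedBall.preimage continuous_subtype_val

theorem IsReflexiveSpace.exists_norm_add_le_norm_mk {Y : Submodule 𝕜 X}
    (hY : IsReflexiveSpace 𝕜 Y) (x : X) :
    ∃ y : Y, ‖x + y‖ ≤ ‖Submodule.Quotient.mk (p := Y) x‖ := by
  set d := ‖Submodule.Quotient.mk (p := Y) x‖
  set t : ℕ → Set (WeakSpace 𝕜 Y) := fun n ↦
    (toWeakSpace 𝕜 Y).symm ⁻¹' {y : Y | ‖x + y‖ ≤ d + 1 / (n + 1)}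
  have ht_compact (n : ℕ) : IsCompact (t n) := by
    simpa only [t, ← LinearEquiv.image_eq_preimage_symm] using
      hY.isCompact_toWeakSpace_setOf_norm_add_le x _
  have ht_nonempty (n : ℕ) : (t n).Nonempty := by
    obtain ⟨y, hy, hxy⟩ := QuotientAddGroup.exists_norm_add_lt Y.toAddSubgroup x
      (Nat.one_div_pos_of_nat (α := ℝ) (n := n))
    exact ⟨toWeakSpace 𝕜 Y ⟨y, hy⟩, hxy.le⟩
  have ht_anti (n : ℕ) : t (n + 1) ⊆ t n := fun _ hy ↦
    hy.trans (add_le_add_right (Nat.one_div_le_one_div n.le_succ) d)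
  obtain ⟨y, hy⟩ := IsCompact.nonempty_iInter_of_sequence_nonempty_isCompact_isClosed t ht_anti
    ht_nonempty (ht_compact 0) fun n ↦ (ht_compact n).isClosed
  have hlim : Tendsto (fun n : ℕ ↦ d + 1 / (n + 1)) atTop (𝓝 d) := by
    simpa using tendsto_one_div_add_atTop_nhds_zero_nat.const_add d
  exact ⟨(toWeakSpace 𝕜 Y).symm y, ge_of_tendsto' hlim (Set.mem_iInter.1 hy)⟩

end Subspace

theorem quotient_ball_weakly_compact_general {X : Type*} [NormedAddCommGroup X] [NormedSpace ℂ X]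
    (Y : Submodule ℂ X) (hY : IsReflexiveSpace ℂ Y) (x : X) (C : ℝ)
    (hC : ‖(Submodule.Quotient.mk x : X ⧸ Y)‖ ≤ C) :
    ({y : Y | ‖x + (y : X)‖ ≤ C}).Nonempty ∧
      Convex ℝ {y : Y | ‖x + (y : X)‖ ≤ C} ∧
      IsCompact (show Set (WeakSpace ℂ Y) from {y : Y | ‖x + (y : X)‖ ≤ C}) := by
  obtain ⟨y, hy⟩ := hY.exists_norm_add_le_norm_mk x
  have hcompact := hY.isCompact_toWeakSpace_setOf_norm_add_le x C
  rw [LinearEquiv.image_eq_preimage_symm] at hcompact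
  exact ⟨⟨y, hy.trans hC⟩, Y.convex_setOf_norm_add_le x C, hcompact⟩

/-- If `Y` is a reflexive closed subspace of a Banach space `X` and `‖x + Y‖ ≤ C`, then
`G = {y ∈ Y : ‖x + y‖ ≤ C}` is nonempty, convex and weakly compact in `Y`. -/
theorem quotient_ball_weakly_compact {X : Type*} [NormedAddCommGroup X] [NormedSpace ℂ X]
    [CompleteSpace X] (Y : Submodule ℂ X) [IsClosed (Y : Set X)]
    (hY : IsReflexiveSpace ℂ Y) (x : X) (C : ℝ)
    (hC : ‖(Submodule.Quotient.mk x : X ⧸ Y)‖ ≤ C) :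
    ({y : Y | ‖x + (y : X)‖ ≤ C}).Nonempty ∧
      Convex ℝ {y : Y | ‖x + (y : X)‖ ≤ C} ∧
      IsCompact (show Set (WeakSpace ℂ Y) from {y : Y | ‖x + (y : X)‖ ≤ C}) :=
  quotient_ball_weakly_compact_general Y hY x C hC
end
end

section
/- Let X be a Banach space whose dual X' contains no subspace isomorphic to ℓ¹. Then X contains no subspace isomorphic to ℓ¹ and no subspace isomorphic to c₀. -/
/-!
If `T : Z → X` is bounded below by `c`, Hahn–Banach lifts every functional `f` on `Z` to one on
`X` of norm at most `‖f‖ / c`. Both `ℓ¹` and `c₀` carry functionals `fₙ` and vectors `z_L` of norm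
at most one, indexed by finite lists `L` of quarter turns, with `fₙ (z_L) = i ^ L[n]` (and `0`
past the end of `L`): in `c₀` take the coordinate functionals and finitely supported vectors; in
`ℓ¹` enumerate the lists, take basis vectors, and let `fₙ` pair against the `n`-th column of the
enumeration. Lifting the `fₙ` to `gₙ ∈ X'`, the map `a ↦ ∑ aₙ gₙ` from `ℓ¹` to `X'` is bounded
below: evaluating at `T z_L`, where `L` rotates each of the first terms of `a` towards the positive
real axis, recovers `‖a‖` up to a factor `2`, because `‖w‖ ≤ 2 Re (i ^ k w)` for some `k`.
-/

noncomputable section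

/-- A Banach space `X` contains an isomorphic copy of the Banach space `Z` if there is a
continuous linear map `Z → X` which is bounded below (hence a linear homeomorphism onto a
closed subspace of `X`). -/
def ContainsCopyOf (𝕜 Z X : Type*) [NontriviallyNormedField 𝕜] [NormedAddCommGroup Z]
    [NormedSpace 𝕜 Z] [NormedAddCommGroup X] [NormedSpace 𝕜 X] : Prop :=
  ∃ T : Z →L[𝕜] X, ∃ c : ℝ, 0 < c ∧ ∀ z : Z, c * ‖z‖ ≤ ‖T z‖

open scoped lp ZeroAtInfty
open Complex Finset

theorem exists_dual_comp_eq_of_bounded_below {𝕜 Z X : Type*} [RCLike 𝕜] [NormedAddCommGroup Z]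
    [NormedSpace 𝕜 Z] [NormedAddCommGroup X] [NormedSpace 𝕜 X] (T : Z →L[𝕜] X) {c : ℝ}
    (hc : 0 < c) (hT : ∀ z, c * ‖z‖ ≤ ‖T z‖) (f : StrongDual 𝕜 Z) :
    ∃ g : StrongDual 𝕜 X, ‖g‖ ≤ ‖f‖ / c ∧ g ∘L T = f := by
  have hinj : Function.Injective T := (injective_iff_map_eq_zero T).2 fun z hz ↦
    norm_le_zero_iff.1 <| nonpos_of_mul_nonpos_right (by simpa [hz] using hT z) hc
  let e := LinearEquiv.ofInjective (T : Z →ₗ[𝕜] X) hinj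
  have hTe : ∀ y, T (e.symm y) = y := fun y ↦ by
    conv_rhs => rw [← e.apply_symm_apply y]
    rfl
  let φ : StrongDual 𝕜 (LinearMap.range (T : Z →ₗ[𝕜] X)) :=
    (f.toLinearMap ∘ₗ e.symm.toLinearMap).mkContinuous (‖f‖ / c) fun y ↦ by
      have := hT (e.symm y)
      rw [hTe] at this
      calc ‖f (e.symm y)‖ ≤ ‖f‖ * ‖e.symm y‖ := f.le_opNorm _
        _ ≤ ‖f‖ / c * ‖y‖ := by
          rw [div_mul_eq_mul_div, le_div_iff₀ hc, mul_assoc]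
          gcongr
          simpa [mul_comm] using this
  obtain ⟨g, hg, hgn⟩ := exists_extension_norm_eq _ φ
  refine ⟨g, hgn ▸ LinearMap.mkContinuous_norm_le _ (by positivity) _,
    ContinuousLinearMap.ext fun z ↦ ?_⟩
  simpa [φ, e] using hg (e z)

section Synthesis

variable {ι 𝕜 W : Type*} [NontriviallyNormedField 𝕜] [NormedAddCommGroup W] [NormedSpace 𝕜 W]
  [CompleteSpace W] {v : ι → W} {M : ℝ}

def l1Synthesis (v : ι → W) (hM : 0 ≤ M) (hv : ∀ i, ‖v i‖ ≤ M) : ℓ¹(ι, 𝕜) →L[𝕜] W :=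
  lp.tsumCLM 𝕜 ι W ∘L
    lp.mapCLM 1 (fun i ↦ ContinuousLinearMap.toSpanSingleton 𝕜 (v i)) hM (by simpa using hv)

theorem summable_smul_of_norm_le (hM : 0 ≤ M) (hv : ∀ i, ‖v i‖ ≤ M) (a : ℓ¹(ι, 𝕜)) :
    Summable fun i ↦ a i • v i := by
  refine (lp.memℓp (lp.mapCLM 1 (fun i ↦ ContinuousLinearMap.toSpanSingleton 𝕜 (v i)) hM
    (by simpa using hv) a)).summable_of_one.congr fun i ↦ ?_
  simp

theorem l1Synthesis_apply (hM : 0 ≤ M) (hv : ∀ i, ‖v i‖ ≤ M) (a : ℓ¹(ι, 𝕜)) :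
    l1Synthesis v hM hv a = ∑' i, a i • v i := by
  simp [l1Synthesis]

theorem l1Synthesis_single [DecidableEq ι] (hM : 0 ≤ M) (hv : ∀ i, ‖v i‖ ≤ M) (i : ι) :
    l1Synthesis v hM hv (lp.single 1 i (1 : 𝕜)) = v i := by
  rw [l1Synthesis_apply, tsum_eq_single i fun j hj ↦ by simp [lp.single_apply, hj]]
  simp

theorem norm_l1Synthesis_le (hM : 0 ≤ M) (hv : ∀ i, ‖v i‖ ≤ M) :
    ‖l1Synthesis (𝕜 := 𝕜) v hM hv‖ ≤ M :=
  (ContinuousLinearMap.opNorm_comp_le _ _).trans <| by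
    simpa using
      mul_le_mul lp.norm_tsumCLM_le (lp.norm_mapCLM_le _ _ hM _) (norm_nonneg _) zero_le_one

theorem map_l1Synthesis (hM : 0 ≤ M) (hv : ∀ i, ‖v i‖ ≤ M) (φ : StrongDual 𝕜 W) (a : ℓ¹(ι, 𝕜)) :
    φ (l1Synthesis v hM hv a) = ∑' i, a i * φ (v i) := by
  simp [l1Synthesis_apply, φ.map_tsum (summable_smul_of_norm_le hM hv a)]

end Synthesis

def quarterTurnSeq (L : List (Fin 4)) (n : ℕ) : ℂ := L[n]?.elim 0 fun j ↦ I ^ (j : ℕ)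

theorem norm_quarterTurnSeq_le (L : List (Fin 4)) (n : ℕ) : ‖quarterTurnSeq L n‖ ≤ 1 := by
  rw [quarterTurnSeq]
  cases L[n]? <;> simp

theorem quarterTurnSeq_of_length_le {L : List (Fin 4)} {n : ℕ} (h : L.length ≤ n) :
    quarterTurnSeq L n = 0 := by
  simp [quarterTurnSeq, h]

theorem quarterTurnSeq_ofFn (N : ℕ) (k : ℕ → Fin 4) (n : ℕ) :
    quarterTurnSeq (List.ofFn fun i : Fin N ↦ k i) n = if n < N then I ^ (k n : ℕ) else 0 := by
  by_cases h : n < N <;> simp [quarterTurnSeq, h]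

theorem exists_norm_le_two_mul_re_I_pow_mul (w : ℂ) :
    ∃ k : Fin 4, ‖w‖ ≤ 2 * (I ^ (k : ℕ) * w).re := by
  have h := norm_le_abs_re_add_abs_im w
  rcases le_total |w.im| |w.re| with hre | him
  · rcases le_total 0 w.re with hw | hw
    · exact ⟨0, by simp; linarith [abs_of_nonneg hw]⟩
    · exact ⟨2, by simp; linarith [abs_of_nonpos hw]⟩
  · rcases le_total 0 w.im with hw | hw
    · exact ⟨3, by simp [pow_succ]; linarith [abs_of_nonneg hw]⟩
    · exact ⟨1, by simp; linarith [abs_of_nonpos hw]⟩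

section Criterion

variable {W : Type*} [NormedAddCommGroup W] [NormedSpace ℂ W] [CompleteSpace W]
  {v : ℕ → W} {M R : ℝ} {φ : List (Fin 4) → StrongDual ℂ W}

theorem norm_le_two_mul_norm_l1Synthesis (hM : 0 ≤ M) (hv : ∀ n, ‖v n‖ ≤ M) (hφ : ∀ L, ‖φ L‖ ≤ R)
    (hφv : ∀ L n, φ L (v n) = quarterTurnSeq L n) (a : ℓ¹(ℕ, ℂ)) :
    ‖a‖ ≤ 2 * R * ‖l1Synthesis v hM hv a‖ := by
  refine le_of_forall_pos_le_add fun ε hε ↦ ?_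
  have ha : HasSum (fun n ↦ ‖a n‖) ‖a‖ := by simpa using lp.hasSum_norm (p := 1) (by simp) a
  obtain ⟨N, hN⟩ : ∃ N, ‖a‖ - ε < ∑ n ∈ range N, ‖a n‖ :=
    (ha.tendsto_sum_nat.eventually (eventually_gt_nhds (by linarith))).exists
  choose k hk using fun n ↦ exists_norm_le_two_mul_re_I_pow_mul (a n)
  set L := List.ofFn fun i : Fin N ↦ k i
  have hφa : φ L (l1Synthesis v hM hv a) = ∑ n ∈ range N, I ^ (k n : ℕ) * a n := by
    rw [map_l1Synthesis, tsum_eq_sum (s := range N) fun n hn ↦ by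
      rw [hφv, quarterTurnSeq_ofFn, if_neg (by simpa using hn), mul_zero]]
    refine sum_congr rfl fun n hn ↦ ?_
    rw [hφv, quarterTurnSeq_ofFn, if_pos (by simpa using hn), mul_comm]
  calc ‖a‖ ≤ ∑ n ∈ range N, ‖a n‖ + ε := by linarith
    _ ≤ 2 * (φ L (l1Synthesis v hM hv a)).re + ε := by
      rw [hφa, re_sum, mul_sum]
      gcongr with n
      exact hk n
    _ ≤ 2 * R * ‖l1Synthesis v hM hv a‖ + ε := by
      rw [mul_assoc]
      gcongr
      exact (re_le_norm _).trans ((φ L).le_of_opNorm_le (hφ L) _)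

theorem containsCopyOf_l1_of_quarterTurns (hM : 0 ≤ M) (hv : ∀ n, ‖v n‖ ≤ M) (hφ : ∀ L, ‖φ L‖ ≤ R)
    (hφv : ∀ L n, φ L (v n) = quarterTurnSeq L n) : ContainsCopyOf ℂ ℓ¹(ℕ, ℂ) W := by
  have hR : 0 ≤ R := (norm_nonneg _).trans (hφ [])
  refine ⟨l1Synthesis v hM hv, (2 * R + 1)⁻¹, by positivity, fun a ↦ ?_⟩
  rw [inv_mul_le_iff₀ (by positivity)]
  have := norm_le_two_mul_norm_l1Synthesis hM hv hφ hφv a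
  nlinarith [norm_nonneg (l1Synthesis v hM hv a)]

end Criterion

def HasQuarterTurnPatterns (Z : Type*) [NormedAddCommGroup Z] [NormedSpace ℂ Z] : Prop :=
  ∃ (f : ℕ → StrongDual ℂ Z) (z : List (Fin 4) → Z), (∀ n, ‖f n‖ ≤ 1) ∧ (∀ L, ‖z L‖ ≤ 1) ∧
    ∀ L n, f n (z L) = quarterTurnSeq L n

theorem hasQuarterTurnPatterns_l1 : HasQuarterTurnPatterns ℓ¹(ℕ, ℂ) := by
  obtain ⟨e, he⟩ := exists_surjective_nat (List (Fin 4))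
  refine ⟨fun n ↦ l1Synthesis (fun k ↦ quarterTurnSeq (e k) n) zero_le_one
      fun k ↦ norm_quarterTurnSeq_le _ _,
    fun L ↦ lp.single 1 (Function.surjInv he L) 1, fun n ↦ norm_l1Synthesis_le _ _,
    fun L ↦ by simp [lp.norm_single], fun L n ↦ ?_⟩
  rw [l1Synthesis_single, Function.surjInv_eq he]

theorem hasQuarterTurnPatterns_c0 : HasQuarterTurnPatterns C₀(ℕ, ℂ) := by
  let f (n : ℕ) : StrongDual ℂ C₀(ℕ, ℂ) :=
    LinearMap.mkContinuous { toFun z := z n, map_add' _ _ := rfl, map_smul' _ _ := rfl } 1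
      fun z ↦ by simpa using BoundedContinuousFunction.norm_coe_le_norm z.toBCF n
  let z (L : List (Fin 4)) : C₀(ℕ, ℂ) :=
    { toFun := quarterTurnSeq L
      continuous_toFun := continuous_of_discreteTopology
      zero_at_infty' := by
        rw [cocompact_eq_atTop]
        exact tendsto_const_nhds.congr' <| Filter.eventually_atTop.2
          ⟨L.length, fun n hn ↦ (quarterTurnSeq_of_length_le hn).symm⟩ }
  refine ⟨f, z, fun n ↦ LinearMap.mkContinuous_norm_le _ zero_le_one _, fun L ↦ ?_,
    fun L n ↦ rfl⟩
  rw [← ZeroAtInftyContinuousMap.norm_toBCF_eq_norm]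
  exact (BoundedContinuousFunction.norm_le zero_le_one).2 (norm_quarterTurnSeq_le L)

theorem HasQuarterTurnPatterns.containsCopyOf_l1_dual {Z X : Type*} [NormedAddCommGroup Z]
    [NormedSpace ℂ Z] [NormedAddCommGroup X] [NormedSpace ℂ X] (hZ : HasQuarterTurnPatterns Z)
    (hZX : ContainsCopyOf ℂ Z X) : ContainsCopyOf ℂ ℓ¹(ℕ, ℂ) (StrongDual ℂ X) := by
  obtain ⟨f, z, hf, hz, hfz⟩ := hZ
  obtain ⟨T, c, hc, hT⟩ := hZX
  choose g hg hgT using fun n ↦ exists_dual_comp_eq_of_bounded_below T hc hT (f n)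
  refine containsCopyOf_l1_of_quarterTurns (v := g)
    (φ := fun L ↦ NormedSpace.inclusionInDoubleDual ℂ X (T (z L))) (M := 1 / c) (R := ‖T‖)
    (by positivity) (fun n ↦ (hg n).trans (by gcongr; exact hf n))
    (fun L ↦ (NormedSpace.double_dual_bound ℂ X _).trans (by simpa using T.le_opNorm_of_le (hz L)))
    fun L n ↦ ?_
  rw [NormedSpace.dual_def, ← hfz, ← hgT n, ContinuousLinearMap.comp_apply]

theorem no_l1_no_c0_of_dual_no_l1_general {X : Type*} [NormedAddCommGroup X] [NormedSpace ℂ X]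
    (h : ¬ ContainsCopyOf ℂ (lp (fun _ : ℕ => ℂ) 1) (StrongDual ℂ X)) :
    ¬ ContainsCopyOf ℂ (lp (fun _ : ℕ => ℂ) 1) X ∧
      ¬ ContainsCopyOf ℂ (ZeroAtInftyContinuousMap ℕ ℂ) X :=
  ⟨fun hX ↦ h (hasQuarterTurnPatterns_l1.containsCopyOf_l1_dual hX),
    fun hX ↦ h (hasQuarterTurnPatterns_c0.containsCopyOf_l1_dual hX)⟩

/-- If the dual of a Banach space `X` contains no copy of `ℓ¹`, then `X` contains no copy of
`ℓ¹` and no copy of `c₀`. -/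
theorem no_l1_no_c0_of_dual_no_l1 {X : Type*} [NormedAddCommGroup X] [NormedSpace ℂ X]
    [CompleteSpace X]
    (h : ¬ ContainsCopyOf ℂ (lp (fun _ : ℕ => ℂ) 1) (StrongDual ℂ X)) :
    ¬ ContainsCopyOf ℂ (lp (fun _ : ℕ => ℂ) 1) X ∧
      ¬ ContainsCopyOf ℂ (ZeroAtInftyContinuousMap ℕ ℂ) X :=
  no_l1_no_c0_of_dual_no_l1_general h
end
end

section
/- Reflexivity is a three-space property: if Y is a closed subspace of a Banach space X such that both Y and the quotient X/Y are reflexive, then X is reflexive. -/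
/-!
Given `Φ ∈ X**`, reflexivity of `X ⧸ Y` applied to `Φ ∘ π*` (with `π : X → X ⧸ Y` the quotient
map) gives `x ∈ X` with `Φ f = f x` for every `f` annihilating `Y`. So `Φ - J x` vanishes on the
annihilator of `Y`, which is the kernel of the restriction map `X* → Y*`. That map is onto by
Hahn–Banach, hence a quotient map by the open mapping theorem, so `Φ - J x` factors through `Y*`,
and reflexivity of `Y` gives `y ∈ Y` with `Φ = J (x + y)`.
-/

noncomputable section

open NormedSpace

namespace ContinuousLinearMap

variable {𝕜 E F G : Type*} [NontriviallyNormedField 𝕜]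
  [NormedAddCommGroup E] [NormedSpace 𝕜 E] [NormedAddCommGroup F] [NormedSpace 𝕜 F]
  [NormedAddCommGroup G] [NormedSpace 𝕜 G]

def dualMap (L : E →L[𝕜] F) : StrongDual 𝕜 F →L[𝕜] StrongDual 𝕜 E :=
  (compL 𝕜 E F 𝕜).flip L

@[simp]
theorem dualMap_apply (L : E →L[𝕜] F) (f : StrongDual 𝕜 F) : L.dualMap f = f.comp L :=
  rfl

theorem exists_comp_eq_of_surjective_of_ker_le [CompleteSpace E] [CompleteSpace F]
    (r : E →L[𝕜] F) (hr : Function.Surjective r) (φ : E →L[𝕜] G)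
    (hker : r.ker ≤ φ.ker) : ∃ ψ : F →L[𝕜] G, ψ.comp r = φ := by
  let ψ : F →ₗ[𝕜] G :=
    (r.ker.liftQ φ hker).comp (r.toLinearMap.quotKerEquivOfSurjective hr).symm.toLinearMap
  have hψ (x : E) : ψ (r x) = φ x := by
    have hsymm : (r.toLinearMap.quotKerEquivOfSurjective hr).symm (r x) = r.ker.mkQ x :=
      (LinearEquiv.symm_apply_eq _).mpr (LinearMap.quotKerEquivOfSurjective_apply_mk _ hr x).symm
    simp [ψ, hsymm]
  refine ⟨⟨ψ, (r.isQuotientMap hr).continuous_iff.mpr ?_⟩, ext hψ⟩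
  exact φ.continuous.congr fun x => (hψ x).symm

end ContinuousLinearMap

section Reflexive

open ContinuousLinearMap

variable {𝕜 E : Type*} [RCLike 𝕜] [NormedAddCommGroup E] [NormedSpace 𝕜 E]

theorem Submodule.dualMap_subtypeL_surjective (S : Submodule 𝕜 E) :
    Function.Surjective S.subtypeL.dualMap := by
  intro g
  obtain ⟨f, hf, -⟩ := exists_extension_norm_eq S g
  exact ⟨f, ContinuousLinearMap.ext hf⟩

theorem Submodule.dualMap_subtypeL_eq_zero_iff {S : Submodule 𝕜 E} {f : StrongDual 𝕜 E} :
    S.subtypeL.dualMap f = 0 ↔ S ≤ f.ker := by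
  simp [ContinuousLinearMap.ext_iff, SetLike.le_def]

theorem exists_apply_eq_of_reflexive_quotient (S : Submodule 𝕜 E) [IsClosed (S : Set E)]
    (hQ : IsReflexiveSpace 𝕜 (E ⧸ S)) (Φ : StrongDual 𝕜 (StrongDual 𝕜 E)) :
    ∃ x : E, ∀ f : StrongDual 𝕜 E, S ≤ f.ker → Φ f = f x := by
  obtain ⟨q, hq⟩ := hQ (Φ.comp S.mkQL.dualMap)
  obtain ⟨x, rfl⟩ := Submodule.Quotient.mk_surjective S q
  refine ⟨x, fun f hf => ?_⟩
  have hfac : S.mkQL.dualMap (S.liftQL f hf) = f := rfl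
  rw [← hfac, ← comp_apply, ← hq, dual_def]
  rfl

theorem exists_apply_eq_of_reflexive_subspace (S : Submodule 𝕜 E)
    (hS : IsReflexiveSpace 𝕜 S) (Φ : StrongDual 𝕜 (StrongDual 𝕜 E))
    (hΦ : ∀ f : StrongDual 𝕜 E, S ≤ f.ker → Φ f = 0) :
    ∃ y : S, ∀ f : StrongDual 𝕜 E, Φ f = f y := by
  obtain ⟨Ψ, hΨ⟩ := S.subtypeL.dualMap.exists_comp_eq_of_surjective_of_ker_le
    S.dualMap_subtypeL_surjective Φ
    fun f hf => hΦ f (Submodule.dualMap_subtypeL_eq_zero_iff.mp hf)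
  obtain ⟨y, rfl⟩ := hS Ψ
  exact ⟨y, fun f => by rw [← hΨ]; rfl⟩

end Reflexive

theorem reflexive_of_subspace_and_quotient_general {X : Type*} [NormedAddCommGroup X] [NormedSpace ℂ X]
    (Y : Submodule ℂ X) [IsClosed (Y : Set X)]
    (hY : IsReflexiveSpace ℂ Y) (hQ : IsReflexiveSpace ℂ (X ⧸ Y)) :
    IsReflexiveSpace ℂ X := by
  intro Φ
  obtain ⟨x, hx⟩ := exists_apply_eq_of_reflexive_quotient Y hQ Φ
  obtain ⟨y, hy⟩ := exists_apply_eq_of_reflexive_subspace Y hY (Φ - inclusionInDoubleDual ℂ X x)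
    fun f hf => by simp [hx f hf]
  refine ⟨x + y, ContinuousLinearMap.ext fun f => ?_⟩
  have hf := hy f
  rw [sub_apply, dual_def, sub_eq_iff_eq_add'] at hf
  rw [dual_def, map_add, hf]

/-- Reflexivity is a three-space property: if a closed subspace `Y` of a Banach space `X` and
the quotient `X ⧸ Y` are both reflexive, then `X` is reflexive. -/
theorem reflexive_of_subspace_and_quotient {X : Type*} [NormedAddCommGroup X] [NormedSpace ℂ X]
    [CompleteSpace X] (Y : Submodule ℂ X) [IsClosed (Y : Set X)]
    (hY : IsReflexiveSpace ℂ Y) (hQ : IsReflexiveSpace ℂ (X ⧸ Y)) :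
    IsReflexiveSpace ℂ X :=
  reflexive_of_subspace_and_quotient_general Y hY hQ
end
end

section
/- Let K be an extremally disconnected compact Hausdorff space, U a dense open subset of K, and f : U → ℂ a bounded continuous function. Then f has a unique continuous extension f̃ ∈ C(K), and ‖f̃‖_∞ = sup_{t ∈ U} |f(t)|. -/
noncomputable section

open Filter Topology Set

/-- In an extremally disconnected space, disjoint open sets have disjoint closures. -/
lemma disjoint_closure_of_disjoint_isOpen {K : Type*} [TopologicalSpace K]
    [ExtremallyDisconnected K] {V W : Set K} (hV : IsOpen V) (hW : IsOpen W)
    (h : Disjoint V W) : Disjoint (closure V) (closure W) := by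
  have hVopen : IsOpen (closure V) := ExtremallyDisconnected.open_closure V hV
  have h1 : Disjoint (closure V) W := by
    rw [Set.disjoint_iff_inter_eq_empty]
    by_contra hne
    obtain ⟨x, hxV, hxW⟩ := Set.nonempty_iff_ne_empty.2 hne
    obtain ⟨y, ⟨_, hyW⟩, hyV⟩ :=
      mem_closure_iff.1 hxV (closure V ∩ W) (hVopen.inter hW) ⟨hxV, hxW⟩
    exact h.ne_of_mem hyV hyW rfl
  have h2 : closure W ⊆ (closure V)ᶜ :=
    closure_minimal (Set.disjoint_right.1 h1) (isClosed_compl_iff.2 hVopen)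
  exact Set.disjoint_left.2 fun x hxV hxW => (h2 hxW) hxV

/-- On an extremally disconnected compact Hausdorff space `K`, every bounded continuous
complex-valued function on a dense open subset `U` has a unique continuous extension to `K`,
and the sup norm of the extension equals the supremum of `|f|` over `U`. -/
theorem exists_unique_extension_of_denseOpen {K : Type*} [TopologicalSpace K] [CompactSpace K]
    [T2Space K] [ExtremallyDisconnected K] (U : Set K) (hUo : IsOpen U) (hUd : Dense U)
    (f : C(U, ℂ)) (M : ℝ) (hM : ∀ t : U, ‖f t‖ ≤ M) :
    (∃! g : C(K, ℂ), ∀ t : U, g t = f t) ∧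
      ∀ g : C(K, ℂ), (∀ t : U, g t = f t) → ‖g‖ = ⨆ t : U, ‖f t‖ := by
  have di : IsDenseInducing ((↑) : U → K) :=
    ⟨IsInducing.subtypeVal, hUd.denseRange_val⟩
  -- the key convergence fact
  have key : ∀ x : K, ∃ c : ℂ, Tendsto f (comap ((↑) : U → K) (𝓝 x)) (𝓝 c) := by
    intro x
    set F : Filter ℂ := map f (comap ((↑) : U → K) (𝓝 x)) with hF
    haveI : NeBot (comap ((↑) : U → K) (𝓝 x)) := di.comap_nhds_neBot x
    haveI hFne : NeBot F := Filter.NeBot.map ‹_› f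
    have hle : F ≤ 𝓟 (Metric.closedBall (0 : ℂ) M) := by
      rw [le_principal_iff, hF, mem_map]
      filter_upwards with t
      simpa [Metric.mem_closedBall, dist_eq_norm] using hM t
    -- x is in the closure of val '' (f ⁻¹' A) for any nbhd A of a cluster point
    have hclos : ∀ a : ℂ, ClusterPt a F → ∀ A ∈ 𝓝 a, x ∈ closure (((↑) : U → K) '' (f ⁻¹' A)) := by
      intro a ha A hA
      rw [mem_closure_iff]
      intro N hNopen hxN
      have hN : ((↑) : U → K) ⁻¹' N ∈ comap ((↑) : U → K) (𝓝 x) :=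
        preimage_mem_comap (hNopen.mem_nhds hxN)
      have hfN : f '' (((↑) : U → K) ⁻¹' N) ∈ F :=
        mem_map.2 (mem_of_superset hN (Set.subset_preimage_image f _))
      have hne : (A ∩ f '' (((↑) : U → K) ⁻¹' N)).Nonempty :=
        ha.nonempty_of_mem (inter_mem (mem_inf_of_left hA) (mem_inf_of_right hfN))
      obtain ⟨z, hzA, t, htN, htz⟩ := hne
      exact ⟨(t : K), htN, ⟨t, by simpa [htz] using hzA, rfl⟩⟩
    -- cluster points of F are unique
    have huniq : ∀ a b : ℂ, ClusterPt a F → ClusterPt b F → a = b := by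
      intro a b ha hb
      by_contra hab
      obtain ⟨A, B, hAo, hBo, haA, hbB, hAB⟩ := t2_separation hab
      have hfA : IsOpen (((↑) : U → K) '' (f ⁻¹' A)) :=
        hUo.isOpenMap_subtype_val _ (hAo.preimage f.continuous)
      have hfB : IsOpen (((↑) : U → K) '' (f ⁻¹' B)) :=
        hUo.isOpenMap_subtype_val _ (hBo.preimage f.continuous)
      have hdis : Disjoint (((↑) : U → K) '' (f ⁻¹' A)) (((↑) : U → K) '' (f ⁻¹' B)) := by
        rw [Set.disjoint_iff_inter_eq_empty, ← Set.image_inter Subtype.val_injective,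
          ← Set.preimage_inter, Set.disjoint_iff_inter_eq_empty.1 hAB]
        simp
      have := disjoint_closure_of_disjoint_isOpen hfA hfB hdis
      exact this.ne_of_mem (hclos a ha A (hAo.mem_nhds haA))
        (hclos b hb B (hBo.mem_nhds hbB)) rfl
    -- F has a cluster point by compactness
    obtain ⟨c, -, hc⟩ := (isCompact_closedBall (0 : ℂ) M).exists_clusterPt hle
    refine ⟨c, ?_⟩
    rw [Tendsto, ← hF, le_iff_ultrafilter]
    intro g hg
    obtain ⟨d, -, hd⟩ := (isCompact_closedBall (0 : ℂ) M).ultrafilter_le_nhds g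
      (le_trans hg hle)
    have hdc : d = c := huniq d c (Filter.neBot_of_le (le_inf hd hg)) hc
    rwa [← hdc]
  -- the extension
  let g₀ : C(K, ℂ) := ⟨di.extend f, di.continuous_extend key⟩
  have hg₀ : ∀ t : U, g₀ t = f t := fun t => di.extend_eq f.continuous t
  have huniq : ∀ g : C(K, ℂ), (∀ t : U, g t = f t) → g = g₀ := by
    intro g hg
    ext x
    have : Set.EqOn g g₀ U := fun t ht => by
      have := (hg ⟨t, ht⟩).trans (hg₀ ⟨t, ht⟩).symm
      simpa using this
    have := (Set.EqOn.closure this g.continuous g₀.continuous)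
    exact this (hUd x)
  constructor
  · exact ⟨g₀, hg₀, fun g hg => huniq g hg⟩
  · intro g hg
    have hS : BddAbove (Set.range fun t : U => ‖f t‖) :=
      ⟨M, by rintro _ ⟨t, rfl⟩; exact hM t⟩
    refine le_antisymm ?_ ?_
    · rcases isEmpty_or_nonempty U with hU | hU
      · haveI : IsEmpty K :=
          ⟨fun x => by simpa [Set.isEmpty_coe_sort.mp hU] using hUd x⟩
        have hg0 : g = 0 := by ext x; exact (IsEmpty.false x).elim
        simp [hg0, Real.iSup_of_isEmpty]
      · refine (ContinuousMap.norm_le g (Real.iSup_nonneg fun t => norm_nonneg _)).2 ?_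
        intro x
        have hsub : U ⊆ {y : K | ‖g y‖ ≤ ⨆ t : U, ‖f t‖} := by
          intro y hy
          have : ‖g y‖ = ‖f ⟨y, hy⟩‖ := by rw [hg ⟨y, hy⟩]
          rw [Set.mem_setOf_eq, this]
          exact le_ciSup hS ⟨y, hy⟩
        have hcl : IsClosed {y : K | ‖g y‖ ≤ ⨆ t : U, ‖f t‖} :=
          isClosed_le (g.continuous.norm) continuous_const
        have := closure_minimal hsub hcl
        rw [hUd.closure_eq] at this
        exact this (Set.mem_univ x)
    · refine Real.iSup_le (fun t => ?_) (norm_nonneg g)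
      rw [← hg t]
      exact g.norm_coe_le_norm t
end
end

section
/- Let X = c₀ ⊕ ℓ² with norm ‖(x,y)‖ = ‖x‖_∞ + ‖y‖₂, regarded as an ℓ^∞-module via coordinatewise multiplication in each summand. Let x ∈ c₀ ∩ ℓ² be the sequence xₙ = 1/n. Then the closed ℓ^∞-submodule of X generated by the two elements (x,x) and (0,x) is all of X, yet the closed submodule generated by (x,x) alone is isomorphic to ℓ² (hence reflexive), and the closed submodule generated by (0,x) equals {0} ⊕ ℓ², while X itself is not reflexive. -/
open Filter
open scoped ENNReal ZeroAtInfty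

noncomputable section

/-- `X = c₀ ⊕ ℓ²` with the norm `‖(x,y)‖ = ‖x‖_∞ + ‖y‖₂`. -/
abbrev X15 : Type _ := WithLp 1 (C₀(ℕ, ℝ) × lp (fun _ : ℕ => ℝ) 2)

/-- Coordinatewise multiplication of an `ℓ^∞` sequence with a `c₀` sequence. -/
def mulC0 (a : lp (fun _ : ℕ => ℝ) ∞) (s : C₀(ℕ, ℝ)) : C₀(ℕ, ℝ) where
  toFun := fun n => a n * s n
  continuous_toFun := continuous_of_discreteTopology
  zero_at_infty' := by
    refine squeeze_zero_norm (a := fun n => ‖a‖ * ‖s n‖) (fun n => ?_) ?_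
    · show ‖a n * s n‖ ≤ ‖a‖ * ‖s n‖
      rw [norm_mul]
      exact mul_le_mul_of_nonneg_right (lp.norm_apply_le_norm ENNReal.top_ne_zero a n)
        (norm_nonneg _)
    · have h0 : Tendsto (fun n => ‖a‖ * ‖s n‖) (cocompact ℕ) (nhds (‖a‖ * ‖(0 : ℝ)‖)) :=
        s.zero_at_infty'.norm.const_mul ‖a‖
      rw [norm_zero, mul_zero] at h0
      exact h0

/-- Coordinatewise multiplication of an `ℓ^∞` sequence with an `ℓ²` sequence. -/
def mulL2 (a : lp (fun _ : ℕ => ℝ) ∞) (v : lp (fun _ : ℕ => ℝ) 2) : lp (fun _ : ℕ => ℝ) 2 :=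
  ⟨fun n => a n * v n, by
    have hv : Summable fun n => ‖v n‖ ^ (2 : ℝ≥0∞).toReal :=
      (memℓp_gen_iff (by norm_num)).1 (lp.memℓp v)
    refine memℓp_gen ?_
    refine Summable.of_nonneg_of_le (fun n => by positivity) (fun n => ?_)
      (hv.mul_left (‖a‖ ^ (2 : ℝ≥0∞).toReal))
    have h1 : ‖a n * v n‖ ≤ ‖a‖ * ‖v n‖ := by
      rw [norm_mul]
      exact mul_le_mul_of_nonneg_right (lp.norm_apply_le_norm ENNReal.top_ne_zero a n)
        (norm_nonneg _)
    calc ‖a n * v n‖ ^ (2 : ℝ≥0∞).toReal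
        ≤ (‖a‖ * ‖v n‖) ^ (2 : ℝ≥0∞).toReal :=
          Real.rpow_le_rpow (norm_nonneg _) h1 (by positivity)
      _ = ‖a‖ ^ (2 : ℝ≥0∞).toReal * ‖v n‖ ^ (2 : ℝ≥0∞).toReal :=
          Real.mul_rpow (norm_nonneg _) (norm_nonneg _)⟩

/-- The `ℓ^∞`-module action on `X = c₀ ⊕ ℓ²`, coordinatewise in each summand. -/
def act (a : lp (fun _ : ℕ => ℝ) ∞) (p : X15) : X15 :=
  (WithLp.equiv 1 _).symm
    (mulC0 a (WithLp.equiv 1 _ p).1, mulL2 a (WithLp.equiv 1 _ p).2)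

/-- The closed `ℓ^∞`-submodule of `X` generated by a set `S`. -/
def genSub (S : Set X15) : Submodule ℝ X15 :=
  (Submodule.span ℝ
    {z : X15 | ∃ a : lp (fun _ : ℕ => ℝ) ∞, ∃ s ∈ S, z = act a s}).topologicalClosure

/-- The sequence `1/n` as an element of `c₀`. -/
def xc0 : C₀(ℕ, ℝ) where
  toFun := fun n => 1 / ((n : ℝ) + 1)
  continuous_toFun := continuous_of_discreteTopology
  zero_at_infty' := by
    rw [cocompact_eq_atTop (α := ℕ)]
    exact tendsto_one_div_add_atTop_nhds_zero_nat

/-- The sequence `1/n` as an element of `ℓ²`. -/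
def xl2 : lp (fun _ : ℕ => ℝ) 2 :=
  ⟨fun n => 1 / ((n : ℝ) + 1), by
    refine memℓp_gen ?_
    have hs : Summable fun n : ℕ => (1 / ((n : ℝ) + 1)) ^ (2 : ℕ) := by
      have h0 : Summable fun n : ℕ => 1 / (n : ℝ) ^ (2 : ℕ) :=
        (Real.summable_one_div_nat_pow (p := 2)).2 (by norm_num)
      have h1 := (summable_nat_add_iff 1).2 h0
      simpa [add_comm] using h1
    refine hs.congr fun n => ?_
    rw [Real.norm_of_nonneg (by positivity), show ((2 : ℝ≥0∞).toReal) = ((2 : ℕ) : ℝ) by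
      norm_num, Real.rpow_natCast]⟩

/-- The generator `(x, x)`. -/
def p1 : X15 := (WithLp.equiv 1 _).symm (xc0, xl2)

/-- The generator `(0, x)`. -/
def p2 : X15 := (WithLp.equiv 1 _).symm (0, xl2)


/-!
The module structure is carried by two `ℓ^∞`-equivariant embeddings of `ℓ²` into `X`,
`v ↦ (v, v)` and `v ↦ (0, v)`, which send `x` to the two generators. Since the unit vector `eₙ`
is the multiple `((n + 1) δₙ) · x`, the closed submodule generated by the image of `x` under
either embedding is the whole (closed) image of that embedding: for `v ↦ (v, v)`, which is
bounded below, this image is isomorphic to `ℓ²`; for `v ↦ (0, v)` it is `{0} ⊕ ℓ²`. Taking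
differences, both generators together give `(v, 0)` for every `v ∈ ℓ²`, and `ℓ²` is dense in
`c₀`. Finally, `X` is not reflexive because the functional `(c, y) ↦ ∑ 2⁻ⁿ cₙ` has norm
`∑ 2⁻ⁿ` but, as `cₙ → 0`, takes only smaller values on the unit ball, whereas on a reflexive
space every functional attains its norm.
-/

open Topology Finset

local notation "ℓ²" => lp (fun _ : ℕ => ℝ) 2
local notation "ℓ∞" => lp (fun _ : ℕ => ℝ) ∞

namespace ZeroAtInftyContinuousMap

variable {α : Type*} [TopologicalSpace α]

theorem norm_apply_le (f : C₀(α, ℝ)) (x : α) : ‖f x‖ ≤ ‖f‖ := by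
  rw [← norm_toBCF_eq_norm]
  exact f.toBCF.norm_coe_le_norm x

theorem norm_le_of_forall {f : C₀(α, ℝ)} {C : ℝ} (hC : 0 ≤ C) (h : ∀ x, ‖f x‖ ≤ C) :
    ‖f‖ ≤ C := by
  rw [← norm_toBCF_eq_norm]
  exact (BoundedContinuousFunction.norm_le hC).2 h

theorem eventually_norm_lt (f : C₀(ℕ, ℝ)) {ε : ℝ} (hε : 0 < ε) : ∀ᶠ n in atTop, ‖f n‖ < ε := by
  have h := f.zero_at_infty'
  rw [cocompact_eq_atTop] at h
  exact (tendsto_zero_iff_norm_tendsto_zero.1 h).eventually (gt_mem_nhds hε)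

end ZeroAtInftyContinuousMap

open ZeroAtInftyContinuousMap

theorem lp.tendsto_norm_cofinite_zero {ι : Type*} {E : ι → Type*}
    [∀ i, NormedAddCommGroup (E i)] {p : ℝ≥0∞} (hp : 0 < p.toReal) (f : lp E p) :
    Tendsto (fun i => ‖f i‖) cofinite (𝓝 0) := by
  have h := ((memℓp_gen_iff hp).1 (lp.memℓp f)).tendsto_cofinite_zero.rpow_const
    (p := p.toReal⁻¹) (Or.inr (by positivity))
  rw [Real.zero_rpow (inv_ne_zero hp.ne')] at h
  exact h.congr fun i => Real.rpow_rpow_inv (norm_nonneg _) hp.ne'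

theorem lp.sum_range_single_apply {p : ℝ≥0∞} (c : ℕ → ℝ) (k m : ℕ) :
    (∑ n ∈ range k, lp.single (E := fun _ : ℕ => ℝ) p n (c n)) m = if m < k then c m else 0 := by
  simp only [lp.coeFn_sum, lp.coeFn_single, Finset.sum_apply, Finset.sum_pi_single, mem_range]

theorem lp.map_mem_of_map_single_mem {E : Type*} [NormedAddCommGroup E] [NormedSpace ℝ E]
    {p : ℝ≥0∞} [Fact (1 ≤ p)] (hp : p ≠ ∞) {M : Submodule ℝ E} (hM : IsClosed (M : Set E))
    (L : lp (fun _ : ℕ => ℝ) p →L[ℝ] E) (hL : ∀ n, L (lp.single p n 1) ∈ M)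
    (v : lp (fun _ : ℕ => ℝ) p) : L v ∈ M := by
  refine hM.mem_of_tendsto ((lp.hasSum_single hp v).mapL L).tendsto_sum_nat
    (Eventually.of_forall fun k => sum_mem fun n _ => ?_)
  have h := lp.single_smul (E := fun _ : ℕ => ℝ) p n (v n) 1
  rw [smul_eq_mul, mul_one] at h
  rw [h, map_smul]
  exact M.smul_mem _ (hL n)

section LpToC0

variable {p : ℝ≥0∞} [Fact (1 ≤ p)]

def lpToC0 (hp : p ≠ ∞) : lp (fun _ : ℕ => ℝ) p →L[ℝ] C₀(ℕ, ℝ) :=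
  LinearMap.mkContinuous
    { toFun v := ⟨⟨v, continuous_of_discreteTopology⟩, by
        rw [cocompact_eq_cofinite]
        exact tendsto_zero_iff_norm_tendsto_zero.2 <| lp.tendsto_norm_cofinite_zero
          (ENNReal.toReal_pos (zero_lt_one.trans_le Fact.out).ne' hp) v⟩
      map_add' _ _ := rfl
      map_smul' _ _ := rfl }
    1 fun v => by
      rw [one_mul]
      exact norm_le_of_forall (norm_nonneg v) fun n =>
        lp.norm_apply_le_norm (zero_lt_one.trans_le Fact.out).ne' v n

theorem lpToC0_apply (hp : p ≠ ∞) (v : lp (fun _ : ℕ => ℝ) p) (n : ℕ) : lpToC0 hp v n = v n :=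
  rfl

theorem denseRange_lpToC0 (hp : p ≠ ∞) : DenseRange (lpToC0 hp) := by
  rw [Metric.denseRange_iff]
  intro c r hr
  obtain ⟨N, hN⟩ := eventually_atTop.1 (c.eventually_norm_lt (half_pos hr))
  set v := ∑ n ∈ range N, lp.single p n (c n)
  refine ⟨v, ?_⟩
  rw [dist_eq_norm']
  refine (norm_le_of_forall (half_pos hr).le fun n => ?_).trans_lt (half_lt_self hr)
  rw [show (lpToC0 hp v - c) n = v n - c n from rfl, lp.sum_range_single_apply]
  by_cases hn : n < N
  · simp [hn, (half_pos hr).le]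
  · simpa [hn] using (hN n (not_lt.1 hn)).le

end LpToC0

section WeightedSum

variable {w : ℕ → ℝ}

theorem summable_apply_mul (hw : Summable fun n => ‖w n‖) (c : C₀(ℕ, ℝ)) :
    Summable fun n => c n * w n :=
  (hw.mul_left ‖c‖).of_norm_bounded fun n => by
    rw [norm_mul]
    exact mul_le_mul_of_nonneg_right (norm_apply_le c n) (norm_nonneg _)

def weightedSum (w : ℕ → ℝ) (hw : Summable fun n => ‖w n‖) : C₀(ℕ, ℝ) →L[ℝ] ℝ :=
  LinearMap.mkContinuous
    { toFun c := ∑' n, c n * w n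
      map_add' c d := by
        simp only [ZeroAtInftyContinuousMap.coe_add, Pi.add_apply, add_mul]
        exact (summable_apply_mul hw c).tsum_add (summable_apply_mul hw d)
      map_smul' r c := by
        simp only [ZeroAtInftyContinuousMap.coe_smul, Pi.smul_apply, smul_eq_mul, mul_assoc,
          RingHom.id_apply]
        exact tsum_mul_left }
    (∑' n, ‖w n‖) fun c => by
      calc ‖∑' n, c n * w n‖ ≤ ∑' n, ‖c‖ * ‖w n‖ := by
            refine tsum_of_norm_bounded (hw.mul_left ‖c‖).hasSum fun n => ?_
            rw [norm_mul]
            exact mul_le_mul_of_nonneg_right (norm_apply_le c n) (norm_nonneg _)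
        _ = (∑' n, ‖w n‖) * ‖c‖ := by rw [tsum_mul_left, mul_comm]

theorem weightedSum_apply (hw : Summable fun n => ‖w n‖) (c : C₀(ℕ, ℝ)) :
    weightedSum w hw c = ∑' n, c n * w n :=
  rfl

theorem weightedSum_lt_tsum (hw : Summable fun n => ‖w n‖) (hw_pos : ∀ n, 0 < w n)
    {c : C₀(ℕ, ℝ)} (hc : ‖c‖ ≤ 1) : weightedSum w hw c < ∑' n, w n := by
  obtain ⟨n₀, hn₀⟩ := (c.eventually_norm_lt one_pos).exists
  have hc_le : ∀ n, c n ≤ 1 := fun n => (le_abs_self _).trans ((norm_apply_le c n).trans hc)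
  exact (summable_apply_mul hw c).tsum_lt_tsum
    (fun n => mul_le_of_le_one_left (hw_pos n).le (hc_le n))
    (mul_lt_of_lt_one_left (hw_pos n₀) ((le_abs_self _).trans_lt hn₀)) hw.of_norm

theorem exists_norm_le_one_weightedSum_eq (hw : Summable fun n => ‖w n‖) (k : ℕ) :
    ∃ c : C₀(ℕ, ℝ), ‖c‖ ≤ 1 ∧ weightedSum w hw c = ∑ n ∈ range k, w n := by
  set v := ∑ n ∈ range k, lp.single 2 n (1 : ℝ)
  have hv : ∀ n, lpToC0 (p := 2) ENNReal.ofNat_ne_top v n = if n < k then 1 else 0 :=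
    lp.sum_range_single_apply _ k
  refine ⟨lpToC0 ENNReal.ofNat_ne_top v, norm_le_of_forall zero_le_one fun n => ?_, ?_⟩
  · rw [hv]; split_ifs <;> simp
  · rw [weightedSum_apply, tsum_eq_sum (s := range k) fun n hn => by simp_all]
    exact sum_congr rfl fun n hn => by simp_all

end WeightedSum

theorem IsReflexiveSpace.exists_norm_le_one_apply_eq_norm {𝕜 E : Type*} [RCLike 𝕜]
    [NormedAddCommGroup E] [NormedSpace 𝕜 E] (hE : IsReflexiveSpace 𝕜 E)
    (f : StrongDual 𝕜 E) : ∃ z : E, ‖z‖ ≤ 1 ∧ f z = ‖f‖ := by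
  obtain ⟨G, hG, hGf⟩ := exists_dual_vector'' 𝕜 f
  obtain ⟨z, rfl⟩ := hE G
  refine ⟨z, ?_, hGf⟩
  rwa [← (NormedSpace.inclusionInDoubleDualLi 𝕜).norm_map z]

theorem not_isReflexiveSpace_withLp_prod_c0 (p : ℝ≥0∞) [Fact (1 ≤ p)] (F : Type*)
    [NormedAddCommGroup F] [NormedSpace ℝ F] :
    ¬ IsReflexiveSpace ℝ (WithLp p (C₀(ℕ, ℝ) × F)) := by
  intro hX
  have hw : Summable fun n : ℕ => ‖((1 : ℝ) / 2) ^ n‖ := by simpa using summable_geometric_two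
  set f := (weightedSum _ hw).comp (WithLp.fstL p ℝ C₀(ℕ, ℝ) F)
  have h_tsum_le : ∑' n : ℕ, ((1 : ℝ) / 2) ^ n ≤ ‖f‖ :=
    Real.tsum_le_of_sum_range_le (fun n => by positivity) fun k => by
      obtain ⟨c, hc, hck⟩ := exists_norm_le_one_weightedSum_eq hw k
      rw [← hck]
      refine (le_abs_self _).trans (f.unit_le_opNorm (WithLp.toLp p (c, 0)) ?_)
      rwa [WithLp.norm_toLp_fst]
  obtain ⟨z, hz, hfz⟩ := hX.exists_norm_le_one_apply_eq_norm f
  have hfz_lt : f z < ‖f‖ :=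
    (weightedSum_lt_tsum hw (fun n => by positivity)
      ((WithLp.norm_fst_le (α := C₀(ℕ, ℝ)) (β := F) z).trans hz)).trans_le h_tsum_le
  exact hfz_lt.ne (by simpa using hfz)

def inlL : C₀(ℕ, ℝ) →L[ℝ] X15 :=
  (WithLp.prodContinuousLinearEquiv 1 ℝ _ _).symm.toContinuousLinearMap.comp (.inl ℝ _ _)

def inrL : ℓ² →L[ℝ] X15 :=
  (WithLp.prodContinuousLinearEquiv 1 ℝ _ _).symm.toContinuousLinearMap.comp (.inr ℝ _ _)

def diagL : ℓ² →L[ℝ] X15 := inlL.comp (lpToC0 (p := 2) ENNReal.ofNat_ne_top) + inrL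

theorem inlL_apply (c : C₀(ℕ, ℝ)) : inlL c = WithLp.toLp 1 (c, 0) :=
  rfl

theorem inrL_apply (v : ℓ²) : inrL v = WithLp.toLp 1 (0, v) :=
  rfl

theorem inlL_fst_add_inrL_snd (z : X15) : inlL z.fst + inrL z.snd = z := by
  rw [inlL_apply, inrL_apply, ← WithLp.toLp_add, Prod.mk_add_mk, add_zero, zero_add]
  rfl

theorem diagL_apply (v : ℓ²) : diagL v = WithLp.toLp 1 (lpToC0 ENNReal.ofNat_ne_top v, v) := by
  change inlL _ + inrL v = _
  rw [inlL_apply, inrL_apply, ← WithLp.toLp_add, Prod.mk_add_mk, add_zero, zero_add]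
  rfl

theorem p1_eq_diagL : p1 = diagL xl2 := by
  rw [diagL_apply]
  rfl

theorem p2_eq_inrL : p2 = inrL xl2 :=
  rfl

theorem act_diagL (a : ℓ∞) (v : ℓ²) : act a (diagL v) = diagL (mulL2 a v) := by
  rw [diagL_apply, diagL_apply]
  exact congrArg (fun c => WithLp.toLp 1 (c, mulL2 a v))
    (ZeroAtInftyContinuousMap.ext fun _ => rfl)

theorem act_inrL (a : ℓ∞) (v : ℓ²) : act a (inrL v) = inrL (mulL2 a v) :=
  congrArg (fun c => WithLp.toLp 1 (c, mulL2 a v))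
    (ZeroAtInftyContinuousMap.ext fun _ => mul_zero _)

theorem mulL2_smul_single_xl2 (n : ℕ) :
    mulL2 (((n : ℝ) + 1) • lp.single ∞ n 1) xl2 = lp.single 2 n 1 := by
  ext k
  change ((((n : ℝ) + 1) • lp.single (E := fun _ : ℕ => ℝ) ∞ n 1 : ℓ∞) k) * (1 / ((k : ℝ) + 1)) = _
  rcases eq_or_ne k n with rfl | hk
  · simp [field]
  · simp [hk]

theorem genSub_le {S : Set X15} {M : Submodule ℝ X15} (hM : IsClosed (M : Set X15))
    (hS : ∀ a, ∀ s ∈ S, act a s ∈ M) : genSub S ≤ M :=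
  Submodule.topologicalClosure_minimal _
    (Submodule.span_le.2 fun _ ⟨a, s, hs, hz⟩ => hz ▸ hS a s hs) hM

theorem act_mem_genSub {S : Set X15} {s : X15} (hs : s ∈ S) (a : ℓ∞) : act a s ∈ genSub S :=
  Submodule.le_topologicalClosure _ (Submodule.subset_span ⟨a, s, hs, rfl⟩)

theorem range_le_genSub {L : ℓ² →L[ℝ] X15} (hL : ∀ a v, act a (L v) = L (mulL2 a v))
    {S : Set X15} (hS : L xl2 ∈ S) : L.range ≤ genSub S := by
  rintro _ ⟨v, rfl⟩
  refine lp.map_mem_of_map_single_mem ENNReal.ofNat_ne_top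
    (Submodule.isClosed_topologicalClosure _) L (fun n => ?_) v
  rw [← mulL2_smul_single_xl2, ← hL]
  exact act_mem_genSub hS _

theorem genSub_singleton_eq_range {L : ℓ² →L[ℝ] X15} (hL : ∀ a v, act a (L v) = L (mulL2 a v))
    (h : IsClosed (Set.range L)) :
    genSub {L xl2} = L.range :=
  le_antisymm (genSub_le h fun a _ hs => hs ▸ hL a xl2 ▸ ⟨mulL2 a xl2, rfl⟩)
    (range_le_genSub hL rfl)

theorem antilipschitz_diagL : AntilipschitzWith 1 diagL :=
  ContinuousLinearMap.antilipschitz_of_bound diagL fun v => by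
    rw [NNReal.coe_one, one_mul]
    simpa [diagL_apply] using WithLp.norm_snd_le (α := C₀(ℕ, ℝ)) (β := ℓ²) (diagL v)

theorem isClosed_range_diagL : IsClosed (Set.range diagL) :=
  antilipschitz_diagL.isClosed_range diagL.uniformContinuous

theorem range_inrL : Set.range inrL = {z : X15 | z.fst = 0} := by
  ext z
  refine ⟨fun ⟨v, hv⟩ => hv ▸ rfl, fun (hz : z.fst = 0) => ⟨z.snd, ?_⟩⟩
  simpa [hz] using inlL_fst_add_inrL_snd z

theorem isClosed_range_inrL : IsClosed (Set.range inrL) := by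
  rw [range_inrL]
  exact isClosed_eq (WithLp.fstL 1 ℝ _ _).continuous continuous_const

theorem genSub_pair_eq_top : genSub {p1, p2} = ⊤ := by
  have h_diag := range_le_genSub act_diagL (S := {p1, p2}) (p1_eq_diagL ▸ Set.mem_insert _ _)
  have h_inr := range_le_genSub act_inrL (S := {p1, p2}) (Set.mem_insert_of_mem _ rfl)
  have h_inl (c : C₀(ℕ, ℝ)) : inlL c ∈ genSub {p1, p2} :=
    (denseRange_lpToC0 (p := 2) ENNReal.ofNat_ne_top).induction_on c
      ((Submodule.isClosed_topologicalClosure _).preimage inlL.continuous) fun v => by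
        rw [show inlL (lpToC0 _ v) = diagL v - inrL v from (add_sub_cancel_right _ _).symm]
        exact sub_mem (h_diag ⟨v, rfl⟩) (h_inr ⟨v, rfl⟩)
  refine eq_top_iff.2 fun z _ => ?_
  rw [← inlL_fst_add_inrL_snd z]
  exact add_mem (h_inl _) (h_inr ⟨_, rfl⟩)

/-- The two elements `(x,x)` and `(0,x)` generate `X = c₀ ⊕ ℓ²` as a closed `ℓ^∞`-module; the
submodule generated by `(x,x)` alone is isomorphic to `ℓ²` (hence reflexive) and the submodule
generated by `(0,x)` is `{0} ⊕ ℓ²`; nevertheless `X` itself is not reflexive. -/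
theorem c0_oplus_l2_example :
    genSub {p1, p2} = ⊤ ∧
      (∃ e : ↥(genSub {p1}) ≃L[ℝ] lp (fun _ : ℕ => ℝ) 2, True) ∧
      ((genSub {p2} : Set X15) = {p : X15 | (WithLp.equiv 1 _ p).1 = 0}) ∧
      ¬ IsReflexiveSpace ℝ X15 := by
  have h_p1 : genSub {p1} = diagL.range :=
    p1_eq_diagL ▸ genSub_singleton_eq_range act_diagL isClosed_range_diagL
  have h_p2 : genSub {p2} = inrL.range := by
    rw [p2_eq_inrL]
    exact genSub_singleton_eq_range act_inrL isClosed_range_inrL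
  refine ⟨genSub_pair_eq_top, ⟨?_, trivial⟩, ?_, not_isReflexiveSpace_withLp_prod_c0 1 ℓ²⟩
  · exact ((diagL.equivRange antilipschitz_diagL.injective isClosed_range_diagL).trans
      (.ofEq _ _ h_p1.symm)).symm
  · rw [h_p2, LinearMap.coe_range, ContinuousLinearMap.coe_coe, range_inrL]
    rfl
end
end

section
/- Let X be a Banach lattice with order continuous norm and let {[eₙ]} be a bounded sequence of pairwise disjoint positive elements of X such that d ≤ ‖[eₙ]‖ for all n and ‖Σ_{n=1}^N ξₙ [eₙ]‖ ≤ D sup|ξₙ| for all finite scalar sequences. If additionally d·sup_{n≤N}|ξₙ| ≤ ‖Σ_{n=1}^N ξₙ [eₙ]‖ for all finite scalar sequences (ξₙ), then the closed sublattice generated by {[eₙ]} is lattice isomorphic to c₀. -/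
open Filter Topology
open scoped ZeroAtInfty

noncomputable section

namespace ZeroAtInftyContinuousMap

instance : Max C₀(ℕ, ℝ) :=
  ⟨fun f g =>
    { toContinuousMap := f.toContinuousMap ⊔ g.toContinuousMap
      zero_at_infty' := by
        have h := f.zero_at_infty'.max g.zero_at_infty'
        rw [max_self] at h
        exact h }⟩

instance : Min C₀(ℕ, ℝ) :=
  ⟨fun f g =>
    { toContinuousMap := f.toContinuousMap ⊓ g.toContinuousMap
      zero_at_infty' := by
        have h := f.zero_at_infty'.min g.zero_at_infty'
        rw [min_self] at h
        exact h }⟩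

instance : LE C₀(ℕ, ℝ) := ⟨fun f g => (f : ℕ → ℝ) ≤ (g : ℕ → ℝ)⟩

instance : LT C₀(ℕ, ℝ) := ⟨fun f g => (f : ℕ → ℝ) < (g : ℕ → ℝ)⟩

/-- The Banach lattice structure of `c₀`, with coordinatewise order. -/
instance : Lattice C₀(ℕ, ℝ) :=
  Function.Injective.lattice (fun f : C₀(ℕ, ℝ) => (f : ℕ → ℝ)) (DFunLike.coe_injective)
    Iff.rfl Iff.rfl (fun _ _ => rfl) (fun _ _ => rfl)

end ZeroAtInftyContinuousMap

/-- The `n`-th standard basis vector of `c₀`. -/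
def c0Basis (n : ℕ) : C₀(ℕ, ℝ) :=
  { toFun := fun m => if m = n then 1 else 0
    continuous_toFun := continuous_of_discreteTopology
    zero_at_infty' := by
      rw [Filter.cocompact_eq_cofinite]
      refine tendsto_const_nhds.congr' ?_
      filter_upwards [(Set.finite_singleton n).compl_mem_cofinite] with m hm
      simp_all [Set.mem_compl_iff] }

/-- A normed lattice has order continuous norm if every nonempty downward-directed set with
infimum `0` contains elements of arbitrarily small norm, cofinally. -/
def HasOrderContinuousNorm (X : Type*) [NormedAddCommGroup X] [Lattice X]
    [IsOrderedAddMonoid X] [HasSolidNorm X] : Prop :=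
  ∀ A : Set X, A.Nonempty → DirectedOn (· ≥ ·) A → IsGLB A 0 →
    ∀ ε : ℝ, 0 < ε → ∃ a ∈ A, ∀ b ∈ A, b ≤ a → ‖b‖ < ε

set_option linter.unusedSectionVars false

section Aux
variable {X : Type*} [NormedAddCommGroup X] [Lattice X]
    [IsOrderedAddMonoid X] [HasSolidNorm X]

lemma aux_inf_add_le {a b c : X} (ha : 0 ≤ a) (hb : 0 ≤ b) (hc : 0 ≤ c) :
    (a + b) ⊓ c ≤ a ⊓ c + b ⊓ c := by
  have h : a ⊓ c + b ⊓ c = ((a + b) ⊓ (a + c)) ⊓ ((c + b) ⊓ (c + c)) := by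
    rw [inf_add, add_inf, add_inf]
  rw [h]
  refine le_inf (le_inf inf_le_left ?_) (le_inf ?_ ?_)
  · exact inf_le_right.trans (le_add_of_nonneg_left ha)
  · exact inf_le_right.trans (le_add_of_nonneg_right hb)
  · exact inf_le_right.trans (le_add_of_nonneg_left hc)

lemma aux_disj_add {x y z : X} (hx : 0 ≤ x) (hy : 0 ≤ y) (hz : 0 ≤ z)
    (hxz : x ⊓ z = 0) (hyz : y ⊓ z = 0) : (x + y) ⊓ z = 0 :=
  le_antisymm ((aux_inf_add_le hx hy hz).trans (by rw [hxz, hyz, add_zero]))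
    (le_inf (add_nonneg hx hy) hz)

lemma aux_disj_nsmul (n : ℕ) {x y : X} (hx : 0 ≤ x) (hy : 0 ≤ y) (h : x ⊓ y = 0) :
    (n • x) ⊓ y = 0 := by
  induction n with
  | zero => simpa [zero_nsmul] using inf_eq_left.2 hy
  | succ n ih =>
      rw [succ_nsmul]
      exact aux_disj_add (nsmul_nonneg hx n) hx hy ih h

lemma aux_nonneg_of_nsmul {n : ℕ} (hn : n ≠ 0) {z : X} (h : 0 ≤ n • z) : 0 ≤ z := by
  have hd : z⁺ ⊓ z⁻ = 0 := posPart_inf_negPart_eq_zero z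
  have hz : n • z = n • z⁺ - n • z⁻ := by rw [← smul_sub, posPart_sub_negPart]
  have hle : n • z⁻ ≤ n • z⁺ := by rwa [hz, sub_nonneg] at h
  have d1 : (n • z⁺) ⊓ z⁻ = 0 := aux_disj_nsmul n (posPart_nonneg z) (negPart_nonneg z) hd
  have d2 : (n • z⁻) ⊓ (n • z⁺) = 0 :=
    aux_disj_nsmul n (negPart_nonneg z) (nsmul_nonneg (posPart_nonneg z) n)
      (by rw [inf_comm]; exact d1)
  have h0 : n • z⁻ = 0 := (inf_eq_left.2 hle).symm.trans d2
  obtain ⟨m, rfl⟩ := Nat.exists_eq_succ_of_ne_zero hn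
  have hle2 : z⁻ ≤ (m + 1) • z⁻ := by
    rw [succ_nsmul]
    exact le_add_of_nonneg_left (nsmul_nonneg (negPart_nonneg z) m)
  have hzneg : z⁻ = 0 := le_antisymm (hle2.trans_eq h0) (negPart_nonneg z)
  have := posPart_sub_negPart z
  rw [hzneg, sub_zero] at this
  rw [← this]
  exact posPart_nonneg z

variable [NormedSpace ℝ X]

lemma aux_smul_nonneg {t : ℝ} (ht : 0 ≤ t) {x : X} (hx : 0 ≤ x) : 0 ≤ t • x := by
  have hnat : ∀ n : ℕ, 0 ≤ (n : ℝ) • x := fun n => by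
    rw [Nat.cast_smul_eq_nsmul]; exact nsmul_nonneg hx n
  have hrat : ∀ q : ℚ, 0 ≤ q → 0 ≤ (q : ℝ) • x := by
    intro q hq
    refine aux_nonneg_of_nsmul (n := q.den) q.den_pos.ne' ?_
    have h1 : q.den • ((q : ℝ) • x) = ((q.den : ℝ) * (q : ℝ)) • x := by
      rw [← Nat.cast_smul_eq_nsmul ℝ, smul_smul]
    have hnum : ((q.num.toNat : ℕ) : ℝ) = ((q.num : ℤ) : ℝ) := by
      exact_mod_cast congrArg (Int.cast : ℤ → ℝ) (Int.toNat_of_nonneg (Rat.num_nonneg.2 hq))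
    have h2 : (q.den : ℝ) * (q : ℝ) = ((q.num.toNat : ℕ) : ℝ) := by
      rw [hnum, Rat.cast_def]
      have hden : (q.den : ℝ) ≠ 0 := Nat.cast_ne_zero.2 q.den_pos.ne'
      field_simp
    rw [h1, h2]
    exact hnat _
  have hcl : IsClosed {s : ℝ | 0 ≤ s • x} :=
    isClosed_le continuous_const (continuous_id.smul continuous_const)
  have hmem : t ∈ closure {s : ℝ | 0 ≤ s • x} := by
    rw [Metric.mem_closure_iff]
    intro ε hε
    obtain ⟨q, hq1, hq2⟩ := exists_rat_btwn (lt_add_of_pos_right t hε)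
    refine ⟨(q : ℝ), hrat q (by exact_mod_cast ht.trans hq1.le), ?_⟩
    rw [Real.dist_eq, abs_sub_lt_iff]
    constructor <;> linarith
  rwa [hcl.closure_eq] at hmem

lemma aux_disj_smul {s t : ℝ} (hs : 0 ≤ s) (ht : 0 ≤ t) {x y : X} (hx : 0 ≤ x) (hy : 0 ≤ y)
    (h : x ⊓ y = 0) : (s • x) ⊓ (t • y) = 0 := by
  have h1 : s • x ≤ ⌈s⌉₊ • x := by
    have h0 : 0 ≤ ((⌈s⌉₊ : ℝ) - s) • x := aux_smul_nonneg (sub_nonneg.2 (Nat.le_ceil s)) hx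
    rw [sub_smul, Nat.cast_smul_eq_nsmul, sub_nonneg] at h0
    exact h0
  have h2 : t • y ≤ ⌈t⌉₊ • y := by
    have h0 : 0 ≤ ((⌈t⌉₊ : ℝ) - t) • y := aux_smul_nonneg (sub_nonneg.2 (Nat.le_ceil t)) hy
    rw [sub_smul, Nat.cast_smul_eq_nsmul, sub_nonneg] at h0
    exact h0
  have d1 : (⌈t⌉₊ • y) ⊓ x = 0 := aux_disj_nsmul _ hy hx (by rw [inf_comm]; exact h)
  have d2 : (⌈s⌉₊ • x) ⊓ (⌈t⌉₊ • y) = 0 :=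
    aux_disj_nsmul _ hx (nsmul_nonneg hy _) (by rw [inf_comm]; exact d1)
  refine le_antisymm ?_ (le_inf (aux_smul_nonneg hs hx) (aux_smul_nonneg ht hy))
  calc (s • x) ⊓ (t • y) ≤ (⌈s⌉₊ • x) ⊓ (⌈t⌉₊ • y) := inf_le_inf h1 h2
  _ = 0 := d2

lemma aux_disj_sum {v : X} (hv : 0 ≤ v) {u : ℕ → X} (hu : ∀ n, 0 ≤ u n)
    (h : ∀ n, u n ⊓ v = 0) (N : ℕ) : (∑ n ∈ Finset.range N, u n) ⊓ v = 0 := by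
  induction N with
  | zero => simpa using inf_eq_left.2 hv
  | succ N ih =>
      rw [Finset.sum_range_succ]
      exact aux_disj_add (Finset.sum_nonneg fun i _ => hu i) (hu N) hv ih (h N)

end Aux

/-- Partial sums of the series `∑ f n • e n`. -/
def auxPsum {X : Type*} [AddCommMonoid X] [Module ℝ X] (e : ℕ → X) (f : C₀(ℕ, ℝ)) (N : ℕ) : X :=
  ∑ n ∈ Finset.range N, f n • e n

/-- In a Banach lattice with order continuous norm, a pairwise disjoint positive sequence
`{eₙ}` with `d ≤ ‖eₙ‖` and `d · sup|ξₙ| ≤ ‖Σ ξₙ eₙ‖ ≤ D · sup|ξₙ|` generates a closed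
sublattice lattice isomorphic to `c₀` (via a lattice embedding sending the `n`-th basis vector
of `c₀` to `eₙ`). -/
theorem sublattice_isomorphic_c0 {X : Type*} [NormedAddCommGroup X] [Lattice X]
    [IsOrderedAddMonoid X] [HasSolidNorm X] [NormedSpace ℝ X]
    [CompleteSpace X] (hoc : HasOrderContinuousNorm X)
    (e : ℕ → X) (hpos : ∀ n, 0 ≤ e n) (hdisj : ∀ m n, m ≠ n → e m ⊓ e n = 0)
    (d D : ℝ) (hd : 0 < d) (hdD : d < D) (hlow : ∀ n, d ≤ ‖e n‖)
    (hub : ∀ (N : ℕ) (ξ : ℕ → ℝ) (C : ℝ), 0 ≤ C → (∀ n < N, |ξ n| ≤ C) →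
      ‖∑ n ∈ Finset.range N, ξ n • e n‖ ≤ D * C)
    (hlb : ∀ (N : ℕ) (ξ : ℕ → ℝ), ∀ n < N, d * |ξ n| ≤ ‖∑ m ∈ Finset.range N, ξ m • e m‖) :
    ∃ T : C₀(ℕ, ℝ) →L[ℝ] X, (∃ c : ℝ, 0 < c ∧ ∀ a, c * ‖a‖ ≤ ‖T a‖) ∧
      (∀ a b : C₀(ℕ, ℝ), T (a ⊔ b) = T a ⊔ T b) ∧
      (∀ a b : C₀(ℕ, ℝ), T (a ⊓ b) = T a ⊓ T b) ∧
      ∀ n, T (c0Basis n) = e n := by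
  classical
  have hD : 0 < D := hd.trans hdD
  set S : C₀(ℕ, ℝ) → ℕ → X := auxPsum e with hSdef
  have hS : ∀ f N, S f N = ∑ n ∈ Finset.range N, f n • e n := fun f N => rfl
  -- coordinatewise norm bound
  have hcoe : ∀ (f : C₀(ℕ, ℝ)) (n : ℕ), |f n| ≤ ‖f‖ := by
    intro f n
    have h := f.toBCF.norm_coe_le_norm n
    rwa [ZeroAtInftyContinuousMap.norm_toBCF_eq_norm, ZeroAtInftyContinuousMap.toBCF_apply,
      Real.norm_eq_abs] at h
  have hnorm_S : ∀ f N, ‖S f N‖ ≤ D * ‖f‖ := fun f N => hub N f ‖f‖ (norm_nonneg f) (fun n _ => hcoe f n)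
  -- tails are small
  have htail : ∀ (f : C₀(ℕ, ℝ)) (ε : ℝ), 0 < ε → ∃ N, ∀ n, N ≤ n → |f n| ≤ ε := by
    intro f ε hε
    have h0 := f.zero_at_infty'
    rw [cocompact_eq_cofinite, Nat.cofinite_eq_atTop] at h0
    obtain ⟨N, hN⟩ := Metric.tendsto_atTop.1 h0 ε hε
    exact ⟨N, fun n hn => by simpa [Real.dist_eq] using (hN n hn).le⟩
  have hgap : ∀ (f : C₀(ℕ, ℝ)) (ε : ℝ), 0 ≤ ε → ∀ N m, N ≤ m → (∀ n, N ≤ n → |f n| ≤ ε) →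
      ‖S f m - S f N‖ ≤ D * ε := by
    intro f ε hε N m hNm hf
    have h1 : S f N = ∑ k ∈ Finset.range m, (if k < N then f k else 0) • e k := by
      rw [hS]
      calc ∑ k ∈ Finset.range N, f k • e k
          = ∑ k ∈ Finset.range N, (if k < N then f k else 0) • e k :=
            Finset.sum_congr rfl fun k hk => by rw [if_pos (Finset.mem_range.1 hk)]
        _ = ∑ k ∈ Finset.range m, (if k < N then f k else 0) • e k :=
            Finset.sum_subset (Finset.range_subset_range.2 hNm) (fun x _ hx => by
              rw [if_neg (by simpa using hx), zero_smul])
    have key : S f m - S f N = ∑ k ∈ Finset.range m, (if k < N then 0 else f k) • e k := by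
      rw [h1, hS, ← Finset.sum_sub_distrib]
      refine Finset.sum_congr rfl fun k _ => ?_
      by_cases h : k < N <;> simp [h, sub_smul]
    rw [key]
    refine hub m _ ε hε fun n _ => ?_
    by_cases hnN : n < N
    · simpa [hnN] using hε
    · simpa [hnN] using hf n (le_of_not_gt hnN)
  have hcauchy : ∀ f : C₀(ℕ, ℝ), CauchySeq (S f) := by
    intro f
    rw [Metric.cauchySeq_iff']
    intro ε hε
    obtain ⟨N, hN⟩ := htail f (ε / (2 * D)) (by positivity)
    refine ⟨N, fun m hm => ?_⟩
    rw [dist_eq_norm]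
    have h1 : ‖S f m - S f N‖ ≤ D * (ε / (2 * D)) := hgap f _ (by positivity) N m hm hN
    have h2 : D * (ε / (2 * D)) = ε / 2 := by field_simp
    rw [h2] at h1
    linarith
  have hconv : ∀ f, ∃ x, Tendsto (S f) atTop (𝓝 x) := fun f =>
    cauchySeq_tendsto_of_complete (hcauchy f)
  choose Tf hTf using hconv
  have hadd : ∀ a b, Tf (a + b) = Tf a + Tf b := by
    intro a b
    refine tendsto_nhds_unique (hTf (a + b)) ?_
    have heq : (fun N => S a N + S b N) = S (a + b) := by
      funext N
      rw [hS, hS, hS, ← Finset.sum_add_distrib]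
      exact Finset.sum_congr rfl fun n _ => by
        have : (a + b) n = a n + b n := rfl
        rw [this, add_smul]
    exact heq ▸ ((hTf a).add (hTf b))
  have hsmulT : ∀ (c : ℝ) (a), Tf (c • a) = c • Tf a := by
    intro c a
    refine tendsto_nhds_unique (hTf (c • a)) ?_
    have heq : (fun N => c • S a N) = S (c • a) := by
      funext N
      rw [hS, hS, Finset.smul_sum]
      exact Finset.sum_congr rfl fun n _ => by
        have : (c • a) n = c * a n := rfl
        rw [this, smul_smul]
    exact heq ▸ ((hTf a).const_smul c)
  have hbound : ∀ f, ‖Tf f‖ ≤ D * ‖f‖ := fun f =>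
    le_of_tendsto' (hTf f).norm (fun N => hnorm_S f N)
  have hSnn : ∀ (f : C₀(ℕ, ℝ)), (∀ n, 0 ≤ f n) → ∀ N, 0 ≤ S f N := by
    intro f hf N
    rw [hS]
    exact Finset.sum_nonneg fun n _ => aux_smul_nonneg (hf n) (hpos n)
  have hdisjT : ∀ (f g : C₀(ℕ, ℝ)), (∀ n, 0 ≤ f n) → (∀ n, 0 ≤ g n) →
      (∀ n, f n = 0 ∨ g n = 0) → Tf f ⊓ Tf g = 0 := by
    intro f g hf hg hfg
    have hterm : ∀ k n, (f k • e k) ⊓ (g n • e n) = 0 := by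
      intro k n
      rcases eq_or_ne k n with rfl | hkn
      · rcases hfg k with h | h
        · rw [h, zero_smul]
          exact inf_eq_left.2 (aux_smul_nonneg (hg k) (hpos k))
        · rw [h, zero_smul]
          exact inf_eq_right.2 (aux_smul_nonneg (hf k) (hpos k))
      · exact aux_disj_smul (hf k) (hg n) (hpos k) (hpos n) (hdisj k n hkn)
    have hfin : ∀ N, (S f N) ⊓ (S g N) = 0 := by
      intro N
      rw [hS, hS]
      refine aux_disj_sum ?_ (fun k => aux_smul_nonneg (hf k) (hpos k)) (fun k => ?_) N
      · exact Finset.sum_nonneg fun m _ => aux_smul_nonneg (hg m) (hpos m)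
      · rw [inf_comm]
        exact aux_disj_sum (aux_smul_nonneg (hf k) (hpos k))
          (fun m => aux_smul_nonneg (hg m) (hpos m))
          (fun m => by rw [inf_comm]; exact hterm k m) N
    refine tendsto_nhds_unique ((hTf f).inf_nhds (hTf g)) ?_
    simp only [hfin]
    exact tendsto_const_nhds
  have hinf : ∀ a b : C₀(ℕ, ℝ), Tf (a ⊓ b) = Tf a ⊓ Tf b := by
    intro a b
    have ha' : Tf a = Tf (a - a ⊓ b) + Tf (a ⊓ b) := by
      rw [← hadd, sub_add_cancel]
    have hb' : Tf b = Tf (b - a ⊓ b) + Tf (a ⊓ b) := by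
      rw [← hadd, sub_add_cancel]
    have key : Tf (a - a ⊓ b) ⊓ Tf (b - a ⊓ b) = 0 := by
      refine hdisjT _ _ ?_ ?_ ?_
      · intro n
        have h1 : (a - a ⊓ b) n = a n - min (a n) (b n) := rfl
        rw [h1, sub_nonneg]
        exact min_le_left _ _
      · intro n
        have h1 : (b - a ⊓ b) n = b n - min (a n) (b n) := rfl
        rw [h1, sub_nonneg]
        exact min_le_right _ _
      · intro n
        have h1 : (a - a ⊓ b) n = a n - min (a n) (b n) := rfl
        have h2 : (b - a ⊓ b) n = b n - min (a n) (b n) := rfl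
        rw [h1, h2]
        rcases le_total (a n) (b n) with h | h
        · left; rw [min_eq_left h, sub_self]
        · right; rw [min_eq_right h, sub_self]
    rw [ha', hb', ← inf_add, key, zero_add]
  have hsub : ∀ u v : C₀(ℕ, ℝ), Tf (u - v) = Tf u - Tf v := by
    intro u v
    have h := hadd (u - v) v
    rw [sub_add_cancel] at h
    exact eq_sub_of_add_eq h.symm
  have hsup : ∀ a b : C₀(ℕ, ℝ), Tf (a ⊔ b) = Tf a ⊔ Tf b := by
    intro a b
    have h1 : a ⊔ b = a + b - a ⊓ b := by
      ext n
      have hL : (a ⊔ b) n = max (a n) (b n) := rfl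
      have hR : (a + b - a ⊓ b) n = a n + b n - min (a n) (b n) := rfl
      rw [hL, hR]
      have := min_add_max (a n) (b n)
      linarith
    rw [h1, hsub, hadd, hinf]
    have h2 := inf_add_sup (Tf a) (Tf b)
    rw [← h2, add_sub_cancel_left]
  refine ⟨LinearMap.mkContinuous
    { toFun := Tf, map_add' := hadd, map_smul' := hsmulT } D hbound, ⟨d, hd, ?_⟩, ?_, ?_, ?_⟩
  · -- lower bound
    intro a
    show d * ‖a‖ ≤ ‖Tf a‖
    have hcoord : ∀ n, d * |a n| ≤ ‖Tf a‖ := by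
      intro n
      refine ge_of_tendsto (hTf a).norm ?_
      filter_upwards [eventually_ge_atTop (n + 1)] with N hN
      rw [hS]
      exact hlb N a n hN
    have hna : ‖a‖ ≤ ‖Tf a‖ / d := by
      rw [← ZeroAtInftyContinuousMap.norm_toBCF_eq_norm]
      refine (BoundedContinuousFunction.norm_le (by positivity)).2 fun n => ?_
      rw [ZeroAtInftyContinuousMap.toBCF_apply, Real.norm_eq_abs, le_div_iff₀ hd, mul_comm]
      exact hcoord n
    calc d * ‖a‖ ≤ d * (‖Tf a‖ / d) := mul_le_mul_of_nonneg_left hna hd.le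
    _ = ‖Tf a‖ := by field_simp
  · exact hsup
  · exact hinf
  · intro n
    show Tf (c0Basis n) = e n
    refine tendsto_nhds_unique (hTf (c0Basis n)) ?_
    refine tendsto_const_nhds.congr' ?_
    filter_upwards [eventually_ge_atTop (n + 1)] with N hN
    rw [hS]
    have hcoef : ∀ m, (c0Basis n) m = if m = n then (1 : ℝ) else 0 := fun m => rfl
    calc e n = ∑ m ∈ Finset.range N, (if m = n then e m else 0) := by
          rw [Finset.sum_ite_eq' (Finset.range N) n e, if_pos (Finset.mem_range.2 hN)]
      _ = ∑ m ∈ Finset.range N, (c0Basis n) m • e m := by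
          refine Finset.sum_congr rfl fun m _ => ?_
          rw [hcoef m]
          by_cases h : m = n <;> simp [h]
end
end
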